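/- Let p > 0, C > 0, let f : ℝ^d → ℝ be convex and differentiable attaining its minimum f* at x*, and let h : ℝ^d → ℝ be convex and differentiable. Let X : (0, ∞) → ℝ^d be twice continuously differentiable and satisfy the Nesterov flow in the form d/dt ∇h(X_t + (t/p) Ẋ_t) = −C p t^{p−1} ∇f(X_t). Then the energy functional E_t = C t^p (f(X_t) − f*) + D_h(x*, X_t + (t/p) Ẋ_t) is nonincreasing in t; more precisely, Ė_t = C p t^{p−1} ( f(X_t) − f* + ⟨∇f(X_t), x* − X_t⟩ ) ≤ 0. -/

import Mathlib

/-! Along `Z t = X t + (t / p) • X' t` the derivative of `D_h(x*, Z t)` is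
`-⟪d/dt ∇h(Z t), x* - Z t⟫`, since the terms involving `Z'` cancel. The flow equation turns
this into `C p t^(p-1) ⟪∇f(X t), x* - X t - (t / p) • X' t⟫`, whose `X'` part cancels the term
`C t^p ⟪∇f(X t), X' t⟫` in the derivative of `C t^p (f(X t) - f*)`. What remains is
`C p t^(p-1) (f(X t) - f* + ⟪∇f(X t), x* - X t⟫)`, which is nonpositive by the first-order
characterisation of convexity. -/

open scoped RealInnerProductSpace
open Real Set

noncomputable section

/-- Bregman divergence `D_h(y, x) = h(y) − h(x) − ⟨∇h(x), y − x⟩`. -/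
def breg (d : ℕ) (h : EuclideanSpace ℝ (Fin d) → ℝ)
    (y x : EuclideanSpace ℝ (Fin d)) : ℝ :=
  h y - h x - ⟪gradient h x, y - x⟫

section InnerProductSpace

variable {E : Type*} [NormedAddCommGroup E] [InnerProductSpace ℝ E] [CompleteSpace E]
  {f : E → ℝ} {g x : E}

theorem HasGradientAt.comp_hasDerivAt {X : ℝ → E} {V : E} {t : ℝ}
    (hf : HasGradientAt f g (X t)) (hX : HasDerivAt X V t) :
    HasDerivAt (fun s => f (X s)) ⟪g, V⟫ t := by
  simpa [InnerProductSpace.toDual_apply_apply, Function.comp_def]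
    using hf.hasFDerivAt.comp_hasDerivAt t hX

theorem ConvexOn.inner_le_sub_of_hasGradientAt (hconv : ConvexOn ℝ univ f)
    (hf : HasGradientAt f g x) (y : E) :
    ⟪g, y - x⟫ ≤ f y - f x := by
  have hline : HasDerivAt (fun s : ℝ => x + s • (y - x)) (y - x) 0 := by
    simpa using ((hasDerivAt_id (0 : ℝ)).smul_const (y - x)).const_add x
  have hφ : ConvexOn ℝ univ (fun s : ℝ => f (x + s • (y - x))) := by
    simpa [Function.comp_def, AffineMap.lineMap_apply_module', add_comm]
      using hconv.comp_affineMap (AffineMap.lineMap x y)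
  have hφ' : HasDerivAt (fun s : ℝ => f (x + s • (y - x))) ⟪g, y - x⟫ 0 :=
    HasGradientAt.comp_hasDerivAt (by simpa using hf) hline
  simpa [slope_def_field] using hφ.le_slope_of_hasDerivAt (mem_univ 0) (mem_univ 1) one_pos hφ'

end InnerProductSpace

theorem Convex.antitoneOn_of_hasDerivAt_nonpos {D : Set ℝ} (hD : Convex ℝ D) (hD' : IsOpen D)
    {f f' : ℝ → ℝ} (hf : ∀ x ∈ D, HasDerivAt f (f' x) x) (hf' : ∀ x ∈ D, f' x ≤ 0) :
    AntitoneOn f D := by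
  refine antitoneOn_of_hasDerivWithinAt_nonpos (f' := f') hD
    (fun x hx => (hf x hx).continuousAt.continuousWithinAt) ?_ ?_ <;> rw [hD'.interior_eq]
  exacts [fun x hx => (hf x hx).hasDerivWithinAt, hf']

theorem hasDerivAt_breg {d : ℕ} {h : EuclideanSpace ℝ (Fin d) → ℝ}
    {Z : ℝ → EuclideanSpace ℝ (Fin d)} {V G y : EuclideanSpace ℝ (Fin d)} {t : ℝ}
    (hh : DifferentiableAt ℝ h (Z t)) (hZ : HasDerivAt Z V t)
    (hG : HasDerivAt (fun s => gradient h (Z s)) G t) :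
    HasDerivAt (fun s => breg d h y (Z s)) (-⟪G, y - Z t⟫) t := by
  have hhZ := hh.hasGradientAt.comp_hasDerivAt hZ
  have hinner := hG.inner ℝ (hZ.const_sub y)
  refine ((hhZ.const_sub (h y)).sub hinner).congr_deriv ?_
  simp only [inner_neg_right]
  ring

section Energy

variable {d : ℕ} {p C : ℝ} {f h : EuclideanSpace ℝ (Fin d) → ℝ}
  {xstar : EuclideanSpace ℝ (Fin d)} {X X' : ℝ → EuclideanSpace ℝ (Fin d)} {t : ℝ}

def nesterovEnergy (d : ℕ) (p C : ℝ) (f h : EuclideanSpace ℝ (Fin d) → ℝ)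
    (xstar : EuclideanSpace ℝ (Fin d)) (X X' : ℝ → EuclideanSpace ℝ (Fin d)) (t : ℝ) :
    ℝ :=
  C * t ^ p * (f (X t) - f xstar) + breg d h xstar (X t + (t / p) • X' t)

theorem hasDerivAt_nesterovEnergy (hp : p ≠ 0) (ht : 0 < t)
    (hf : DifferentiableAt ℝ f (X t)) (hh : DifferentiableAt ℝ h (X t + (t / p) • X' t))
    (hX : HasDerivAt X (X' t) t) (hX' : DifferentiableAt ℝ X' t)
    (hflow : HasDerivAt (fun s => gradient h (X s + (s / p) • X' s))
      (-(C * p * t ^ (p - 1)) • gradient f (X t)) t) :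
    HasDerivAt (nesterovEnergy d p C f h xstar X X')
      (C * p * t ^ (p - 1) * (f (X t) - f xstar + ⟪gradient f (X t), xstar - X t⟫)) t := by
  have hZ : HasDerivAt (fun s => X s + (s / p) • X' s)
      (X' t + ((t / p) • deriv X' t + (1 / p) • X' t)) t :=
    hX.add (((hasDerivAt_id' t).div_const p).smul hX'.hasDerivAt)
  have hpow := (Real.hasDerivAt_rpow_const (p := p) (Or.inl ht.ne')).const_mul C
  have hfX := (hf.hasGradientAt.comp_hasDerivAt hX).sub_const (f xstar)
  refine ((hpow.mul hfX).add (hasDerivAt_breg hh hZ hflow)).congr_deriv ?_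
  simp only [inner_sub_right, inner_add_right, real_inner_smul_left,
    real_inner_smul_right, Real.rpow_sub_one ht.ne']
  field_simp
  ring

end Energy

theorem nesterov_flow_energy_decreasing
    (d : ℕ) (p C : ℝ) (hp : 0 < p) (hC : 0 < C)
    (f h : EuclideanSpace ℝ (Fin d) → ℝ)
    (hconv : ConvexOn ℝ Set.univ f) (hf : Differentiable ℝ f)
    (hh : Differentiable ℝ h)
    (xstar : EuclideanSpace ℝ (Fin d))
    (X X' X'' : ℝ → EuclideanSpace ℝ (Fin d))
    (hX : ∀ t ∈ Set.Ioi (0 : ℝ), HasDerivAt X (X' t) t)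
    (hX' : ∀ t ∈ Set.Ioi (0 : ℝ), HasDerivAt X' (X'' t) t)
    (hflow : ∀ t ∈ Set.Ioi (0 : ℝ),
      HasDerivAt (fun s => gradient h (X s + (s / p) • X' s))
        (-(C * p * t ^ (p - 1)) • gradient f (X t)) t) :
    AntitoneOn
      (fun t : ℝ => C * t ^ p * (f (X t) - f xstar) + breg d h xstar (X t + (t / p) • X' t))
      (Set.Ioi 0) ∧
    ∀ t ∈ Set.Ioi (0 : ℝ),
      HasDerivAt
        (fun t : ℝ => C * t ^ p * (f (X t) - f xstar) + breg d h xstar (X t + (t / p) • X' t))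
        (C * p * t ^ (p - 1) * (f (X t) - f xstar + ⟪gradient f (X t), xstar - X t⟫)) t ∧
      C * p * t ^ (p - 1) * (f (X t) - f xstar + ⟪gradient f (X t), xstar - X t⟫) ≤ 0 := by
  set E' : ℝ → ℝ :=
    fun t => C * p * t ^ (p - 1) * (f (X t) - f xstar + ⟪gradient f (X t), xstar - X t⟫)
  have hE : ∀ t ∈ Ioi (0 : ℝ), HasDerivAt (nesterovEnergy d p C f h xstar X X') (E' t) t :=
    fun t ht => hasDerivAt_nesterovEnergy hp.ne' ht (hf _) (hh _) (hX t ht)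
      (hX' t ht).differentiableAt (hflow t ht)
  have hE'_nonpos : ∀ t ∈ Ioi (0 : ℝ), E' t ≤ 0 := fun t (ht : 0 < t) =>
    mul_nonpos_of_nonneg_of_nonpos (by positivity)
      (by linarith [hconv.inner_le_sub_of_hasGradientAt (hf (X t)).hasGradientAt xstar])
  exact ⟨(convex_Ioi 0).antitoneOn_of_hasDerivAt_nonpos isOpen_Ioi hE hE'_nonpos,
    fun t ht => ⟨hE t ht, hE'_nonpos t ht⟩⟩
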